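/- If P and Q are mr×mr circulant-block permutation matrices of the form P = B_P ⊗ I_{p}^r and Q = B_Q ⊗ I_{q}^r with B_P and B_Q strongly noncommutative m×m permutation matrices, then P and Q are strongly noncommutative (PQ and QP have no overlapping column), regardless of the shifts p, q ∈ {0,…,r−1}. -/
import Mathlib


open Kronecker

/-- The `r × r` circulant permutation matrix `I_s^r`. -/
def circ (r s : ℕ) : Matrix (Fin r) (Fin r) ℤ :=
  Matrix.of fun i j => if (j : ℕ) = ((i : ℕ) + s) % r then 1 else 0

/-- Matrices `A` and `B` are strongly noncommutative if `AB` and `BA` have no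
overlapping column: each column of `AB` differs from that of `BA`. -/
def StronglyNoncommutative {n : Type*} [Fintype n]
    (A B : Matrix n n ℤ) : Prop :=
  ∀ j : n, ∃ i : n, (A * B) i j ≠ (B * A) i j

/-- A permutation matrix: the matrix of some permutation. -/
def IsPermMatrix {n : Type*} [Fintype n] [DecidableEq n] (M : Matrix n n ℤ) : Prop :=
  ∃ σ : Equiv.Perm n, M = σ.permMatrix ℤ

lemma circ_mul_circ (r : ℕ) (hr : 0 < r) (a b : ℕ) :
    circ r a * circ r b = circ r (a + b) := by
  ext i j
  rw [Matrix.mul_apply]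
  have key : ∀ k : Fin r, circ r a i k * circ r b k j =
      if k = (⟨((i : ℕ) + a) % r, Nat.mod_lt _ hr⟩ : Fin r) then circ r b k j else 0 := by
    intro k
    simp only [circ, Matrix.of_apply, Fin.ext_iff]
    split <;> simp_all
  simp only [key, Finset.sum_ite_eq', Finset.mem_univ, if_true]
  simp only [circ, Matrix.of_apply]
  congr 1
  have : ((((i : ℕ) + a) % r) + b) % r = ((i : ℕ) + (a + b)) % r := by
    rw [Nat.mod_add_mod, Nat.add_assoc]
  simp [this]

/-- If `B_P` and `B_Q` are strongly noncommutative permutation matrices, then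
`P = B_P ⊗ I_p^r` and `Q = B_Q ⊗ I_q^r` are strongly noncommutative, for any
shifts `p, q ∈ {0,…,r−1}`. -/
theorem kronecker_stronglyNoncommutative (m r : ℕ) (hr : 0 < r)
    (p q : ℕ) (hp : p < r) (hq : q < r)
    (BP BQ : Matrix (Fin m) (Fin m) ℤ)
    (hP : IsPermMatrix BP) (hQ : IsPermMatrix BQ)
    (h : StronglyNoncommutative BP BQ) :
    StronglyNoncommutative (BP ⊗ₖ circ r p) (BQ ⊗ₖ circ r q) := by
  intro j
  obtain ⟨i1, hi1⟩ := h j.1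
  -- choose i2 with ((i2 + (p+q)) % r = j.2
  set s : ℕ := (p + q) % r with hs
  have hslt : s < r := Nat.mod_lt _ hr
  refine ⟨(i1, ⟨((j.2 : ℕ) + (r - s)) % r, Nat.mod_lt _ hr⟩), ?_⟩
  have hcirc : ∀ i2 : Fin r,
      circ r (p + q) i2 j.2 = if (j.2 : ℕ) = ((i2 : ℕ) + (p + q)) % r then 1 else 0 := by
    intro i2; rfl
  have hval : ((((j.2 : ℕ) + (r - s)) % r) + (p + q)) % r = (j.2 : ℕ) := by
    rw [Nat.mod_add_mod, Nat.add_mod _ (p + q), ← hs, Nat.mod_add_mod]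
    have h2 : (j.2 : ℕ) + (r - s) + s = (j.2 : ℕ) + r := by omega
    rw [h2, Nat.add_mod_right, Nat.mod_eq_of_lt j.2.isLt]
  rw [← Matrix.mul_kronecker_mul, ← Matrix.mul_kronecker_mul,
    circ_mul_circ r hr p q, circ_mul_circ r hr q p, Nat.add_comm q p]
  simp only [Matrix.kroneckerMap_apply, hcirc, hval, if_pos rfl, mul_one, if_true]
  exact hi1
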